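/- With the dynamic-programming value function V defined semantically as in the context, the following recursion holds. Let x, y ∈ {1,…,n} with max(x, y) = h < n, where x = y is allowed only if x ∈ S, and suppose S ∩ {min(x,y)+1, …, h} = ∅ when x ≠ y. Then for every integer m: if h+1 ∈ S, then V(x, y, m) = c_{x, h+1} + c_{h+1, y} + V(h+1, h+1, m+1); and if h+1 ∉ S, then V(x, y, m) = min( c_{x, h+1} + V(h+1, y, m), c_{h+1, y} + V(x, h+1, m+1) ), where by convention the minimum of an empty set of feasible completions is +∞. -/

import Mathlib

/-! Node `k = h + 1` is the smallest node that neither partial tour has visited, so in every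
feasible completion it is the first node of `A` or the last node of `B`, and of both exactly when
`k ∈ S`. Deleting `k` maps the completions from `(x, y)` onto those from the successor states
(bijectively when `k ∈ S`; from their disjoint union when `k ∉ S`), the balance counter shifts by
one exactly when `k` is deleted from `B`, and the length drops by the cost of the edges at `k`. -/

/-- Length of a walk along a list of nodes (sum of consecutive edge costs). -/
def pathLen (C : ℕ → ℕ → ℝ) : List ℕ → ℝ
  | [] => 0
  | [_] => 0
  | a :: b :: t => C a b + pathLen C (b :: t)

/-- `(A, B)` is a feasible completion from `(x, y)`:
`A ∪ B = {h+1,…,n}` and `A ∩ B = S ∩ {h+1,…,n}` where `h = max x y`. -/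
def IsFeasCompl (n : ℕ) (S : Finset ℕ) (x y : ℕ) (A B : Finset ℕ) : Prop :=
  A ∪ B = Finset.Icc (max x y + 1) n ∧ A ∩ B = S ∩ Finset.Icc (max x y + 1) n

/-- Length of the feasible completion `(A, B)` from `(x, y)`: the walk goes
from `x` through the elements of `A` in increasing order to node `1`, and
then from node `1` through the elements of `B` in decreasing order to `y`. -/
noncomputable def complLen (C : ℕ → ℕ → ℝ) (x y : ℕ) (A B : Finset ℕ) : ℝ :=
  pathLen C (x :: (A.sort (· ≤ ·) ++ [1])) +
    pathLen C (1 :: ((B.sort (· ≤ ·)).reverse ++ [y]))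

/-- The semantically defined dynamic-programming value function `V(x, y, m)`:
the minimum length over all feasible completions `(A, B)` from `(x, y)`
respecting the balance window `⌈(n+|S|−p)/2⌉ ≤ m + |B| ≤ ⌊(n+|S|+p)/2⌋`;
it is `+∞` if no such completion exists, or if `x ≠ y` and
`S ∩ {min(x,y)+1,…,max(x,y)} ≠ ∅`. -/
noncomputable def V (n : ℕ) (C : ℕ → ℕ → ℝ) (S : Finset ℕ) (p : ℕ)
    (x y : ℕ) (m : ℤ) : EReal :=
  if x ≠ y ∧ (S ∩ Finset.Icc (min x y + 1) (max x y)).Nonempty then ⊤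
  else
    ⨅ AB : {AB : Finset ℕ × Finset ℕ //
        IsFeasCompl n S x y AB.1 AB.2 ∧
        ⌈((n : ℚ) + S.card - p) / 2⌉ ≤ m + AB.2.card ∧
        m + AB.2.card ≤ ⌊((n : ℚ) + S.card + p) / 2⌋},
      ((complLen C x y AB.1.1 AB.1.2 : ℝ) : EReal)

open Finset

lemma pathLen_append_pair (C : ℕ → ℕ → ℝ) :
    ∀ (l : List ℕ) (a b : ℕ), pathLen C (l ++ [a, b]) = pathLen C (l ++ [a]) + C a b
  | [], _, _ => by simp [pathLen]
  | [_], _, _ => by simp [pathLen]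
  | c :: d :: l, a, b => by
    have ih := pathLen_append_pair C (d :: l) a b
    simp only [List.cons_append, pathLen] at ih ⊢
    rw [ih, add_assoc]

lemma sort_insert_of_forall_lt {α : Type*} [LinearOrder α] {k : α} {A : Finset α}
    (hA : ∀ a ∈ A, k < a) :
    (insert k A).sort (· ≤ ·) = k :: A.sort (· ≤ ·) :=
  sort_insert _ (fun a ha => (hA a ha).le) (fun hk => lt_irrefl k (hA k hk))

section complLen

variable (C : ℕ → ℕ → ℝ) (x y : ℕ) {k : ℕ} {A B : Finset ℕ}

lemma complLen_insert_left (hA : ∀ a ∈ A, k < a) :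
    complLen C x y (insert k A) B = C x k + complLen C k y A B := by
  simp only [complLen, sort_insert_of_forall_lt hA, List.cons_append, pathLen, add_assoc]

lemma complLen_insert_right (hB : ∀ b ∈ B, k < b) :
    complLen C x y A (insert k B) = C k y + complLen C x k A B := by
  simp only [complLen, sort_insert_of_forall_lt hB, List.reverse_cons, List.append_assoc,
    List.singleton_append, ← List.cons_append, pathLen_append_pair]
  ring

lemma complLen_insert_insert (hA : ∀ a ∈ A, k < a) (hB : ∀ b ∈ B, k < b) :
    complLen C x y (insert k A) (insert k B) = C x k + C k y + complLen C k k A B := by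
  rw [complLen_insert_left C x y hA, complLen_insert_right C k y hB, add_assoc]

end complLen

/-- `IsFeasCompl n S x y` is `Feasible n S (max x y + 1)`: feasibility depends only on the
first node `k` not yet visited by either partial tour. -/
def Feasible (n : ℕ) (S : Finset ℕ) (k : ℕ) (A B : Finset ℕ) : Prop :=
  A ∪ B = Icc k n ∧ A ∩ B = S ∩ Icc k n

namespace Feasible

variable {n : ℕ} {S : Finset ℕ} {k : ℕ} {A B : Finset ℕ}

lemma lt_of_mem_left (hf : Feasible n S (k + 1) A B) : ∀ a ∈ A, k < a := fun _ ha =>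
  Nat.add_one_le_iff.1 (mem_Icc.1 (hf.1 ▸ mem_union_left B ha)).1

lemma lt_of_mem_right (hf : Feasible n S (k + 1) A B) : ∀ b ∈ B, k < b := fun _ hb =>
  Nat.add_one_le_iff.1 (mem_Icc.1 (hf.1 ▸ mem_union_right A hb)).1

lemma mem_or_mem (hf : Feasible n S k A B) (hkn : k ≤ n) : k ∈ A ∨ k ∈ B :=
  mem_union.1 (hf.1 ▸ mem_Icc.2 ⟨le_rfl, hkn⟩)

lemma mem_and_mem_iff (hf : Feasible n S k A B) (hkn : k ≤ n) : k ∈ A ∧ k ∈ B ↔ k ∈ S := by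
  rw [← mem_inter, hf.2, mem_inter, and_iff_left (mem_Icc.2 ⟨le_rfl, hkn⟩)]

lemma insert_insert (hf : Feasible n S (k + 1) A B) (hkn : k ≤ n) (hk : k ∈ S) :
    Feasible n S k (insert k A) (insert k B) := by
  rw [Feasible, ← insert_union_distrib, ← insert_inter_distrib, hf.1, hf.2,
    ← inter_insert_of_mem hk, insert_Icc_add_one_left_eq_Icc hkn]
  exact ⟨rfl, rfl⟩

lemma insert_left (hf : Feasible n S (k + 1) A B) (hkn : k ≤ n) (hk : k ∉ S) :
    Feasible n S k (insert k A) B := by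
  have hkB : k ∉ B := fun h => lt_irrefl k (hf.lt_of_mem_right k h)
  rw [Feasible, insert_union, insert_inter_of_notMem hkB, hf.1, hf.2,
    ← inter_insert_of_notMem hk, insert_Icc_add_one_left_eq_Icc hkn]
  exact ⟨rfl, rfl⟩

lemma insert_right (hf : Feasible n S (k + 1) A B) (hkn : k ≤ n) (hk : k ∉ S) :
    Feasible n S k A (insert k B) := by
  have hkA : k ∉ A := fun h => lt_irrefl k (hf.lt_of_mem_left k h)
  rw [Feasible, union_insert, inter_insert_of_notMem hkA, hf.1, hf.2,
    ← inter_insert_of_notMem hk, insert_Icc_add_one_left_eq_Icc hkn]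
  exact ⟨rfl, rfl⟩

lemma erase_erase (hf : Feasible n S k A B) : Feasible n S (k + 1) (A.erase k) (B.erase k) := by
  have hIcc : Icc (k + 1) n = (Icc k n).erase k := by
    rw [Icc_erase_left, Icc_add_one_left_eq_Ioc]
  rw [Feasible, ← erase_union_distrib, erase_inter, inter_erase, erase_idem, hf.1, hf.2, hIcc,
    inter_erase]
  exact ⟨rfl, rfl⟩

end Feasible

def InBalanceWindow (n : ℕ) (S : Finset ℕ) (p : ℕ) (b : ℤ) : Prop :=
  ⌈((n : ℚ) + S.card - p) / 2⌉ ≤ b ∧ b ≤ ⌊((n : ℚ) + S.card + p) / 2⌋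

/-- The index type of the infimum defining `V n C S p x y m` when `k = max x y + 1`. -/
abbrev Completion (n : ℕ) (S : Finset ℕ) (p k : ℕ) (m : ℤ) : Type :=
  {AB : Finset ℕ × Finset ℕ // Feasible n S k AB.1 AB.2 ∧ InBalanceWindow n S p (m + AB.2.card)}

lemma add_card_insert {α : Type*} [DecidableEq α] {k : α} {B : Finset α} (hk : k ∉ B) (m : ℤ) :
    m + ((insert k B).card : ℤ) = m + 1 + B.card := by
  rw [card_insert_of_notMem hk]
  push_cast
  ring

lemma add_card_erase {α : Type*} [DecidableEq α] {k : α} {B : Finset α} (hk : k ∈ B) (m : ℤ) :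
    m + (B.card : ℤ) = m + 1 + (B.erase k).card := by
  rw [← card_erase_add_one hk]
  push_cast
  ring

namespace Completion

variable {n : ℕ} {S : Finset ℕ} {p k : ℕ} {m : ℤ} (hkn : k ≤ n)

def insertBoth (hk : k ∈ S) (c : Completion n S p (k + 1) (m + 1)) : Completion n S p k m :=
  ⟨(insert k c.1.1, insert k c.1.2), c.2.1.insert_insert hkn hk, by
    rw [add_card_insert (fun h => lt_irrefl k (c.2.1.lt_of_mem_right k h))]
    exact c.2.2⟩

def insertLeft (hk : k ∉ S) (c : Completion n S p (k + 1) m) : Completion n S p k m :=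
  ⟨(insert k c.1.1, c.1.2), c.2.1.insert_left hkn hk, c.2.2⟩

def insertRight (hk : k ∉ S) (c : Completion n S p (k + 1) (m + 1)) : Completion n S p k m :=
  ⟨(c.1.1, insert k c.1.2), c.2.1.insert_right hkn hk, by
    rw [add_card_insert (fun h => lt_irrefl k (c.2.1.lt_of_mem_right k h))]
    exact c.2.2⟩

lemma insertBoth_surjective (hk : k ∈ S) :
    Function.Surjective (insertBoth (n := n) (p := p) (m := m) hkn hk) := by
  rintro ⟨⟨A, B⟩, hf, hw⟩
  obtain ⟨hkA, hkB⟩ := (hf.mem_and_mem_iff hkn).2 hk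
  refine ⟨⟨(A.erase k, B.erase k), hf.erase_erase, add_card_erase hkB m ▸ hw⟩, ?_⟩
  simp only [insertBoth, insert_erase hkA, insert_erase hkB]

lemma insertLeft_insertRight_surjective (hk : k ∉ S) :
    Function.Surjective
      (Sum.elim (insertLeft (n := n) (p := p) (m := m) hkn hk) (insertRight hkn hk)) := by
  rintro ⟨⟨A, B⟩, hf, hw⟩
  have hkAB : ¬(k ∈ A ∧ k ∈ B) := fun h => hk ((hf.mem_and_mem_iff hkn).1 h)
  rcases hf.mem_or_mem hkn with hkA | hkB
  · have hkB : k ∉ B := fun h => hkAB ⟨hkA, h⟩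
    have hf' := hf.erase_erase
    rw [erase_eq_of_notMem hkB] at hf'
    exact ⟨Sum.inl ⟨(A.erase k, B), hf', hw⟩,
      by simp only [Sum.elim_inl, insertLeft, insert_erase hkA]⟩
  · have hkA : k ∉ A := fun h => hkAB ⟨h, hkB⟩
    have hf' := hf.erase_erase
    rw [erase_eq_of_notMem hkA] at hf'
    exact ⟨Sum.inr ⟨(A, B.erase k), hf', add_card_erase hkB m ▸ hw⟩,
      by simp only [Sum.elim_inr, insertRight, insert_erase hkB]⟩

end Completion

lemma EReal.coe_add_iInf {ι : Sort*} (c : ℝ) (f : ι → EReal) :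
    (c : EReal) + ⨅ i, f i = ⨅ i, (c : EReal) + f i := by
  have cancel : ∀ (d : ℝ) (z : EReal), (d : EReal) + (((-d : ℝ) : EReal) + z) = z := fun d z => by
    rw [← add_assoc, ← EReal.coe_add, add_neg_cancel, EReal.coe_zero, zero_add]
  refine le_antisymm (le_iInf fun i => add_le_add_right (iInf_le f i) _) ?_
  calc ⨅ i, (c : EReal) + f i
      = c + (((-c : ℝ) : EReal) + ⨅ i, (c : EReal) + f i) := (cancel c _).symm
    _ ≤ c + ⨅ i, f i := by
      refine add_le_add_right (le_iInf fun i => ?_) _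
      calc ((-c : ℝ) : EReal) + ⨅ i, (c : EReal) + f i
          ≤ ((-c : ℝ) : EReal) + ((c : EReal) + f i) := add_le_add_right (iInf_le _ i) _
        _ = f i := by simpa only [neg_neg] using cancel (-c) (f i)

lemma V_eq_iInf (n : ℕ) (C : ℕ → ℕ → ℝ) (S : Finset ℕ) (p : ℕ) {x y k : ℕ} (m : ℤ)
    (hk : max x y + 1 = k) (hgap : x ≠ y → S ∩ Icc (min x y + 1) (max x y) = ∅) :
    V n C S p x y m = ⨅ AB : Completion n S p k m, (complLen C x y AB.1.1 AB.1.2 : EReal) := by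
  subst hk
  rw [V, if_neg fun h => h.2.ne_empty (hgap h.1)]
  rfl

lemma inter_Icc_eq_empty_of_le {α : Type*} [Preorder α] [LocallyFiniteOrder α] [DecidableEq α]
    {S : Finset α} {a b c d : α} (h : S ∩ Icc a b = ∅)
    (hac : a ≤ c) (hdb : d ≤ b) : S ∩ Icc c d = ∅ :=
  subset_empty.1 (h ▸ inter_subset_inter_left (Icc_subset_Icc hac hdb))

lemma inter_Icc_max_add_one_eq_empty {S : Finset ℕ} {x y : ℕ}
    (hgap : x ≠ y → S ∩ Icc (min x y + 1) (max x y) = ∅) (hk : max x y + 1 ∉ S) :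
    S ∩ Icc (min x y + 1) (max x y + 1) = ∅ := by
  refine eq_empty_of_forall_notMem fun a ha => ?_
  obtain ⟨haS, ha⟩ := mem_inter.1 ha
  rcases (mem_Icc.1 ha).2.lt_or_eq with hlt | rfl
  · have hxy : x ≠ y := by rintro rfl; simp only [mem_Icc, min_self, max_self] at ha; omega
    exact notMem_empty a (hgap hxy ▸ mem_inter.2 ⟨haS, mem_Icc.2 ⟨(mem_Icc.1 ha).1, by omega⟩⟩)
  · exact hk haS

theorem dp_value_function_recursion_general
    (n : ℕ) (C : ℕ → ℕ → ℝ)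
    (S : Finset ℕ) (p : ℕ)
    (x y : ℕ)
    (h : ℕ) (hdef : h = max x y) (hhn : h < n)
    (hgap : x ≠ y → S ∩ Finset.Icc (min x y + 1) h = ∅)
    (m : ℤ) :
    (h + 1 ∈ S →
      V n C S p x y m =
        ((C x (h + 1) + C (h + 1) y : ℝ) : EReal) +
          V n C S p (h + 1) (h + 1) (m + 1)) ∧
    (h + 1 ∉ S →
      V n C S p x y m =
        min (((C x (h + 1) : ℝ) : EReal) + V n C S p (h + 1) y m)
          (((C (h + 1) y : ℝ) : EReal) + V n C S p x (h + 1) (m + 1))) := by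
  subst hdef
  set k := max x y + 1
  have hkn : k ≤ n := hhn
  rw [V_eq_iInf n C S p m rfl hgap]
  refine ⟨fun hk => ?_, fun hk => ?_⟩
  · rw [V_eq_iInf n C S p _ (by rw [max_self]) (absurd rfl), EReal.coe_add_iInf,
      ← (Completion.insertBoth_surjective hkn hk).iInf_comp]
    refine iInf_congr fun c => ?_
    rw [← EReal.coe_add]
    exact congrArg _ (complLen_insert_insert C x y c.2.1.lt_of_mem_left c.2.1.lt_of_mem_right)
  · have hE := inter_Icc_max_add_one_eq_empty hgap hk
    rw [V_eq_iInf n C S p _ (by omega : max k y + 1 = k + 1)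
        fun _ => inter_Icc_eq_empty_of_le hE (by omega) (by omega),
      V_eq_iInf n C S p _ (by omega : max x k + 1 = k + 1)
        fun _ => inter_Icc_eq_empty_of_le hE (by omega) (by omega),
      EReal.coe_add_iInf, EReal.coe_add_iInf,
      ← (Completion.insertLeft_insertRight_surjective hkn hk).iInf_comp, iInf_sum]
    congr 1 <;> refine iInf_congr fun c => ?_ <;> rw [← EReal.coe_add] <;> apply congrArg
    · exact complLen_insert_left C x y c.2.1.lt_of_mem_left
    · exact complLen_insert_right C x y c.2.1.lt_of_mem_right

theorem dp_value_function_recursion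
    (n : ℕ) (C : ℕ → ℕ → ℝ) (hsym : ∀ i j, C i j = C j i)
    (S : Finset ℕ) (hS : S ⊆ Finset.Icc 1 n) (h1S : 1 ∈ S) (p : ℕ)
    (x y : ℕ) (hx : x ∈ Finset.Icc 1 n) (hy : y ∈ Finset.Icc 1 n)
    (h : ℕ) (hdef : h = max x y) (hhn : h < n)
    (heq : x = y → x ∈ S)
    (hgap : x ≠ y → S ∩ Finset.Icc (min x y + 1) h = ∅)
    (m : ℤ) :
    (h + 1 ∈ S →
      V n C S p x y m =
        ((C x (h + 1) + C (h + 1) y : ℝ) : EReal) +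
          V n C S p (h + 1) (h + 1) (m + 1)) ∧
    (h + 1 ∉ S →
      V n C S p x y m =
        min (((C x (h + 1) : ℝ) : EReal) + V n C S p (h + 1) y m)
          (((C (h + 1) y : ℝ) : EReal) + V n C S p x (h + 1) (m + 1))) :=
  dp_value_function_recursion_general n C S p x y h hdef hhn hgap m
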